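/- arXiv:2508.07130 — 2 statements merged into one kernel-verified Lean document; each statement's English description precedes it below -/
import Mathlib

section
/- Let p : (0,∞) → ℝ belong to the class S (hypotheses (p1)–(p3)). Then there exists a constant L > 0 such that |x^{p(x)} − y^{p(y)}| ≤ L·|x − y| for all x, y ∈ (0,∞). -/
open Filter Real

/-- Class `S` of admissible variable exponents (hypotheses (p1)–(p3)). -/
structure IsInClassS (p : ℝ → ℝ) (P : ℝ) : Prop where
  diff : ∀ x : ℝ, 0 < x → DifferentiableAt ℝ p x
  one_le : ∀ x : ℝ, 0 < x → 1 ≤ p x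
  le_sup : ∀ x : ℝ, 0 < x → p x ≤ P
  tendsto_one : Tendsto p atTop (nhds 1)
  limsup_lt : ∃ M : ℝ, ∀ᶠ x : ℝ in atTop, (p x - 1) * Real.log x ≤ M
  deriv_bound : ∃ δ M₀ C₀ α : ℝ, 0 < δ ∧ 0 < M₀ ∧ 0 < C₀ ∧ 0 < α ∧ P < 1 + α ∧
    (∀ x : ℝ, 0 < x → x ≤ δ → |deriv p x| ≤ M₀) ∧
    (∀ x : ℝ, δ < x → |deriv p x| ≤ C₀ * x ^ (-1 - α))

/-- For `0 < x ≤ 1`, `x * |log x| ≤ 1`. -/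
lemma aux_xlog (x : ℝ) (hx : 0 < x) (hx1 : x ≤ 1) : x * |Real.log x| ≤ 1 := by
  have hlog : Real.log x ≤ 0 := Real.log_nonpos hx.le hx1
  have : |Real.log x| = Real.log x⁻¹ := by
    rw [Real.log_inv, abs_of_nonpos hlog]
  rw [this]
  have h2 : Real.log x⁻¹ ≤ x⁻¹ - 1 := Real.log_le_sub_one_of_pos (by positivity)
  calc x * Real.log x⁻¹ ≤ x * (x⁻¹ - 1) := by nlinarith
    _ = 1 - x := by field_simp
    _ ≤ 1 := by linarith

/-- For `1 ≤ x` and `α > 0`, `x ^ (-α) * log x ≤ 1/α`. -/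
lemma aux_xlog' (x α : ℝ) (hx : 1 ≤ x) (hα : 0 < α) :
    x ^ (-α) * Real.log x ≤ 1 / α := by
  have hx0 : (0:ℝ) < x := lt_of_lt_of_le one_pos hx
  have h1 : Real.log x ≤ x ^ α / α := by
    rw [le_div_iff₀ hα]
    have := Real.log_le_sub_one_of_pos (Real.rpow_pos_of_pos hx0 α)
    have hlr : Real.log (x ^ α) = α * Real.log x := Real.log_rpow hx0 α
    nlinarith
  have hpow : x ^ (-α) * x ^ α = 1 := by
    rw [← Real.rpow_add hx0]; simp
  have hxneg : (0:ℝ) < x ^ (-α) := Real.rpow_pos_of_pos hx0 _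
  calc x ^ (-α) * Real.log x ≤ x ^ (-α) * (x ^ α / α) :=
      mul_le_mul_of_nonneg_left h1 hxneg.le
    _ = (x ^ (-α) * x ^ α) / α := by ring
    _ = 1 / α := by rw [hpow]

set_option maxHeartbeats 1600000 in
theorem stmt_7 (p : ℝ → ℝ) (P : ℝ) (hp : IsInClassS p P) :
    ∃ L : ℝ, 0 < L ∧ ∀ x y : ℝ, 0 < x → 0 < y →
      |x ^ p x - y ^ p y| ≤ L * |x - y| := by
  obtain ⟨δ, M₀, C₀, α, hδ, hM₀, hC₀, hα, _hPα, hd1, hd2⟩ := hp.deriv_bound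
  -- `P ≥ 1`
  have hP1 : 1 ≤ P := le_trans (hp.one_le 1 one_pos) (hp.le_sup 1 one_pos)
  -- uniform bound `K` on `x ^ (p x - 1)` for `x ≥ 1`
  obtain ⟨M, hM⟩ := hp.limsup_lt
  obtain ⟨X₀, hX₀⟩ := (eventually_atTop).1 hM
  set X₁ : ℝ := max X₀ 1 with hX₁def
  have hX₁1 : (1:ℝ) ≤ X₁ := le_max_right _ _
  have hcont : ContinuousOn (fun x => (p x - 1) * Real.log x) (Set.Icc 1 X₁) := by
    intro x hx
    have hx0 : (0:ℝ) < x := lt_of_lt_of_le one_pos hx.1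
    exact ContinuousAt.continuousWithinAt (by
      exact (((hp.diff x hx0).continuousAt.sub continuousAt_const).mul
        (Real.continuousAt_log hx0.ne')))
  obtain ⟨x₀, _, hx₀max⟩ := (isCompact_Icc).exists_isMaxOn
    (Set.nonempty_Icc.2 hX₁1) hcont
  set M₁ : ℝ := max M ((p x₀ - 1) * Real.log x₀) with hM₁def
  set K : ℝ := Real.exp M₁ with hKdef
  have hK0 : 0 < K := Real.exp_pos _
  have hKbound : ∀ x : ℝ, 1 ≤ x → x ^ (p x - 1) ≤ K := by
    intro x hx
    have hx0 : (0:ℝ) < x := lt_of_lt_of_le one_pos hx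
    have hle : (p x - 1) * Real.log x ≤ M₁ := by
      rcases le_or_gt x X₁ with h | h
      · exact le_trans (hx₀max ⟨hx, h⟩) (le_max_right _ _)
      · exact le_trans (hX₀ x (le_trans (le_max_left _ _) h.le)) (le_max_left _ _)
    rw [Real.rpow_def_of_pos hx0]
    exact Real.exp_le_exp.2 (by rw [mul_comm]; exact hle)
  have hK1 : ∀ x : ℝ, 0 < x → x ≤ 1 → x ^ (p x - 1) ≤ 1 := by
    intro x hx0 hx1
    exact Real.rpow_le_one hx0.le hx1 (by linarith [hp.one_le x hx0])
  -- bound on x ^ (p x): `≤ K * x` for `x ≥ 1`, `≤ x` for `x ≤ 1`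
  have hsplit : ∀ x : ℝ, 0 < x → x ^ p x = x * x ^ (p x - 1) := by
    intro x hx0
    have h : x ^ p x = x ^ ((1:ℝ) + (p x - 1)) := by norm_num
    rw [h, Real.rpow_add hx0, Real.rpow_one]
  -- the Lipschitz constant
  set L : ℝ := P * K + (M₀ * (1 + K * δ ^ 2) + C₀ * δ ^ (-1 - α) + C₀ * K * (1 / α)) + 1
    with hLdef
  have hδpow : (0:ℝ) < δ ^ (-1 - α) := Real.rpow_pos_of_pos hδ _
  have hL0 : 0 < L := by positivity
  refine ⟨L, hL0, ?_⟩
  -- derivative of f at any x > 0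
  set f : ℝ → ℝ := fun x => x ^ p x with hfdef
  set f' : ℝ → ℝ := fun x => 1 * p x * x ^ (p x - 1) + deriv p x * x ^ p x * Real.log x
    with hf'def
  have hderiv : ∀ x : ℝ, 0 < x → HasDerivAt f (f' x) x := by
    intro x hx0
    exact (hasDerivAt_id x).rpow (hp.diff x hx0).hasDerivAt hx0
  -- derivative bound
  have hbound : ∀ x : ℝ, 0 < x → |f' x| ≤ L := by
    intro x hx0
    have hpx1 : 1 ≤ p x := hp.one_le x hx0
    have hpxP : p x ≤ P := hp.le_sup x hx0
    have hpow0 : (0:ℝ) < x ^ (p x - 1) := Real.rpow_pos_of_pos hx0 _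
    have hpowx0 : (0:ℝ) < x ^ p x := Real.rpow_pos_of_pos hx0 _
    -- term 1 bound
    have hT1 : p x * x ^ (p x - 1) ≤ P * K := by
      rcases le_or_gt x 1 with h | h
      · have := hK1 x hx0 h
        have hKge1 : 1 ≤ K := by
          calc (1:ℝ) = (1:ℝ) ^ (p 1 - 1) := by simp
            _ ≤ K := hKbound 1 le_rfl
        nlinarith
      · have := hKbound x h.le
        nlinarith
    -- term 2 bound
    have hT2 : |deriv p x| * (x ^ p x * |Real.log x|) ≤
        M₀ * (1 + K * δ ^ 2) + C₀ * δ ^ (-1 - α) + C₀ * K * (1 / α) := by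
      have hxlog : 0 ≤ x ^ p x * |Real.log x| := by positivity
      rcases le_or_gt x δ with hxδ | hxδ
      · -- |p'| ≤ M₀
        have hd := hd1 x hx0 hxδ
        have hcore : x ^ p x * |Real.log x| ≤ 1 + K * δ ^ 2 := by
          rcases le_or_gt x 1 with h1 | h1
          · have hxp : x ^ p x ≤ x := by
              calc x ^ p x = x * x ^ (p x - 1) := hsplit x hx0
                _ ≤ x * 1 := by nlinarith [hK1 x hx0 h1]
                _ = x := mul_one x
            calc x ^ p x * |Real.log x| ≤ x * |Real.log x| := by
                  nlinarith [abs_nonneg (Real.log x)]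
              _ ≤ 1 := aux_xlog x hx0 h1
              _ ≤ 1 + K * δ ^ 2 := by nlinarith
          · -- 1 < x ≤ δ
            have hxp : x ^ p x ≤ K * δ := by
              calc x ^ p x = x * x ^ (p x - 1) := hsplit x hx0
                _ ≤ x * K := by nlinarith [hKbound x h1.le]
                _ ≤ δ * K := by nlinarith
                _ = K * δ := mul_comm _ _
            have hlogx : |Real.log x| ≤ δ := by
              rw [abs_of_nonneg (Real.log_nonneg h1.le)]
              calc Real.log x ≤ x - 1 := Real.log_le_sub_one_of_pos hx0
                _ ≤ δ := by linarith
            calc x ^ p x * |Real.log x| ≤ (K * δ) * δ := by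
                  nlinarith [abs_nonneg (Real.log x)]
              _ = K * δ ^ 2 := by ring
              _ ≤ 1 + K * δ ^ 2 := by linarith
        calc |deriv p x| * (x ^ p x * |Real.log x|) ≤ M₀ * (1 + K * δ ^ 2) := by
              nlinarith [abs_nonneg (deriv p x)]
          _ ≤ M₀ * (1 + K * δ ^ 2) + C₀ * δ ^ (-1 - α) + C₀ * K * (1 / α) := by
              have h1 : 0 ≤ C₀ * δ ^ (-1 - α) := by positivity
              have h2 : 0 ≤ C₀ * K * (1 / α) := by positivity
              linarith
      · -- x > δ: |p'| ≤ C₀ x^{-1-α}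
        have hd := hd2 x hxδ
        have hxpow : (0:ℝ) < x ^ (-1 - α) := Real.rpow_pos_of_pos hx0 _
        rcases le_or_gt x 1 with h1 | h1
        · -- δ < x ≤ 1
          have hxδpow : x ^ (-1 - α) ≤ δ ^ (-1 - α) :=
            Real.rpow_le_rpow_of_nonpos hδ hxδ.le (by linarith)
          have hcore : x ^ p x * |Real.log x| ≤ 1 := by
            have hxp : x ^ p x ≤ x := by
              calc x ^ p x = x * x ^ (p x - 1) := hsplit x hx0
                _ ≤ x * 1 := by nlinarith [hK1 x hx0 h1]
                _ = x := mul_one x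
            calc x ^ p x * |Real.log x| ≤ x * |Real.log x| := by
                  nlinarith [abs_nonneg (Real.log x)]
              _ ≤ 1 := aux_xlog x hx0 h1
          have hdd : |deriv p x| ≤ C₀ * δ ^ (-1 - α) := by nlinarith
          calc |deriv p x| * (x ^ p x * |Real.log x|) ≤ (C₀ * δ ^ (-1 - α)) * 1 := by
                nlinarith [abs_nonneg (deriv p x)]
            _ = C₀ * δ ^ (-1 - α) := mul_one _
            _ ≤ M₀ * (1 + K * δ ^ 2) + C₀ * δ ^ (-1 - α) + C₀ * K * (1 / α) := by
                have h1' : 0 ≤ M₀ * (1 + K * δ ^ 2) := by positivity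
                have h2 : 0 ≤ C₀ * K * (1 / α) := by positivity
                linarith
        · -- x > 1
          have hxp : x ^ p x ≤ K * x := by
            calc x ^ p x = x * x ^ (p x - 1) := hsplit x hx0
              _ ≤ x * K := by nlinarith [hKbound x h1.le]
              _ = K * x := mul_comm _ _
          have hlog0 : 0 ≤ Real.log x := Real.log_nonneg h1.le
          have hlogabs : |Real.log x| = Real.log x := abs_of_nonneg hlog0
          have hxa : x ^ (-1 - α) * x = x ^ (-α) := by
            have : x ^ (-1 - α) * x ^ (1:ℝ) = x ^ (-1 - α + 1) := (Real.rpow_add hx0 _ _).symm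
            rw [Real.rpow_one] at this
            rw [this]; congr 1; ring
          have hxa0 : (0:ℝ) < x ^ (-α) := Real.rpow_pos_of_pos hx0 _
          have hfin : x ^ (-α) * Real.log x ≤ 1 / α := aux_xlog' x α h1.le hα
          calc |deriv p x| * (x ^ p x * |Real.log x|)
              ≤ (C₀ * x ^ (-1 - α)) * (K * x * Real.log x) := by
                rw [hlogabs]
                have h0 : 0 ≤ x ^ p x * Real.log x := by positivity
                have h4 : x ^ p x * Real.log x ≤ K * x * Real.log x := by nlinarith
                nlinarith [abs_nonneg (deriv p x)]
            _ = C₀ * K * (x ^ (-1 - α) * x * Real.log x) := by ring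
            _ = C₀ * K * (x ^ (-α) * Real.log x) := by rw [hxa]
            _ ≤ C₀ * K * (1 / α) :=
                mul_le_mul_of_nonneg_left hfin (by positivity)
            _ ≤ M₀ * (1 + K * δ ^ 2) + C₀ * δ ^ (-1 - α) + C₀ * K * (1 / α) := by
                have h1' : 0 ≤ M₀ * (1 + K * δ ^ 2) := by positivity
                have h2 : 0 ≤ C₀ * δ ^ (-1 - α) := by positivity
                linarith
    -- combine
    have habs : |f' x| ≤ p x * x ^ (p x - 1) + |deriv p x| * (x ^ p x * |Real.log x|) := by
      have h1 : f' x = p x * x ^ (p x - 1) + deriv p x * x ^ p x * Real.log x := by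
        simp [hf'def]
      rw [h1]
      calc |p x * x ^ (p x - 1) + deriv p x * x ^ p x * Real.log x|
          ≤ |p x * x ^ (p x - 1)| + |deriv p x * x ^ p x * Real.log x| := abs_add_le _ _
        _ = p x * x ^ (p x - 1) + |deriv p x| * (x ^ p x * |Real.log x|) := by
            rw [abs_of_nonneg (by positivity : (0:ℝ) ≤ p x * x ^ (p x - 1)),
              abs_mul, abs_mul, abs_of_nonneg hpowx0.le, mul_assoc]
    calc |f' x| ≤ p x * x ^ (p x - 1) + |deriv p x| * (x ^ p x * |Real.log x|) := habs
      _ ≤ P * K + (M₀ * (1 + K * δ ^ 2) + C₀ * δ ^ (-1 - α) + C₀ * K * (1 / α)) :=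
          add_le_add hT1 hT2
      _ ≤ L := by rw [hLdef]; linarith
  -- Mean value theorem on the convex set `Ioi 0`
  intro x y hx hy
  have := (convex_Ioi (0:ℝ)).norm_image_sub_le_of_norm_hasDerivWithin_le
    (f' := f') (fun z hz => (hderiv z hz).hasDerivWithinAt)
    (fun z hz => by rw [Real.norm_eq_abs]; exact hbound z hz)
    (Set.mem_Ioi.2 hy) (Set.mem_Ioi.2 hx)
  simpa [Real.norm_eq_abs, hfdef] using this
end

section
/- Let p : (0,∞) → ℝ belong to the class S. Then there exists a constant K > 0 such that x^{p(x)} ≤ K·(1 + x) for all x ∈ (0,∞). -/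
open Filter Real

theorem stmt_8 (p : ℝ → ℝ) (P : ℝ) (hp : IsInClassS p P) :
    ∃ K : ℝ, 0 < K ∧ ∀ x : ℝ, 0 < x → x ^ p x ≤ K * (1 + x) := by
  obtain ⟨M, hM⟩ := hp.limsup_lt
  obtain ⟨R0, hR0⟩ := eventually_atTop.mp hM
  set R : ℝ := max R0 1 with hRdef
  have hR1 : (1:ℝ) ≤ R := le_max_right _ _
  have hcont : ContinuousOn (fun x => x ^ p x) (Set.Icc 1 R) := by
    intro x hx
    have hx0 : (0:ℝ) < x := lt_of_lt_of_le one_pos hx.1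
    exact (ContinuousAt.rpow continuousAt_id
      ((hp.diff x hx0).continuousAt) (Or.inl (ne_of_gt hx0))).continuousWithinAt
  obtain ⟨c, hcmem, hcmax⟩ := (isCompact_Icc).exists_isMaxOn
    ⟨1, Set.left_mem_Icc.mpr hR1⟩ hcont
  set C : ℝ := c ^ p c with hCdef
  set K : ℝ := max (max 1 (Real.exp M)) C with hKdef
  have hK1 : (1:ℝ) ≤ K := le_trans (le_max_left _ _) (le_max_left _ _)
  have hKM : Real.exp M ≤ K := le_trans (le_max_right _ _) (le_max_left _ _)
  have hKC : C ≤ K := le_max_right _ _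
  refine ⟨K, lt_of_lt_of_le one_pos hK1, ?_⟩
  intro x hx
  have h1x : (1:ℝ) ≤ 1 + x := by linarith
  rcases le_or_gt x 1 with hle | hgt
  · have h1 : x ^ p x ≤ x ^ (1:ℝ) :=
      Real.rpow_le_rpow_of_exponent_ge hx hle (hp.one_le x hx)
    rw [Real.rpow_one] at h1
    nlinarith
  rcases le_or_gt x R with hxR | hxR
  · have h2 : x ^ p x ≤ C := hcmax ⟨hgt.le, hxR⟩
    nlinarith
  · have hxR0 : R0 ≤ x := le_trans (le_max_left _ _) hxR.le
    have hb : (p x - 1) * Real.log x ≤ M := hR0 x hxR0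
    have heq : x ^ p x = Real.exp ((p x - 1) * Real.log x) * x := by
      calc x ^ p x = Real.exp (Real.log x * p x) := Real.rpow_def_of_pos hx _
        _ = Real.exp ((p x - 1) * Real.log x + Real.log x) := by ring_nf
        _ = Real.exp ((p x - 1) * Real.log x) * Real.exp (Real.log x) := Real.exp_add _ _
        _ = Real.exp ((p x - 1) * Real.log x) * x := by rw [Real.exp_log hx]
    rw [heq]
    have he : Real.exp ((p x - 1) * Real.log x) ≤ Real.exp M := Real.exp_le_exp.mpr hb
    have hx0 : (0:ℝ) ≤ x := hx.le
    nlinarith [Real.exp_pos ((p x - 1) * Real.log x), Real.exp_pos M]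
end
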